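/- Direct consistency for superfluity: for every extension E that is conflict-free in the general argumentation framework AF_g' after considering successful attacks, E contains no superfluous conflicting goals, in the sense that no two arguments A, B in E stand in the superfluous attack relation R_s. -/

import Mathlib

/-! The superfluous attack relation is symmetric: Case 3 is the instance of Case 2 whose second
witness is the attacked argument itself, concluding its own claim at its root. Hence for an
`R_s` pair inside `E`, the direction going from the more preferred claim to the less preferred
one survives in `AF_g'`, contradicting conflict-freeness. -/

namespace GoalsPaper

/-- Literals of a propositional language over atoms `α`. -/
inductive Lit (α : Type) where
  | pos : α → Lit α
  | neg : α → Lit α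
deriving DecidableEq

/-- Negation of a literal. -/
def Lit.compl {α : Type} : Lit α → Lit α
  | .pos a => .neg a
  | .neg a => .pos a

/-- An element occurring in plans: a literal (belief, goal or action)
or a resource atom `res_q(name, value)` over resource names `ν`. -/
inductive Elem (α ν : Type) where
  | lit : Lit α → Elem α ν
  | res : ν → ℕ → Elem α ν
deriving DecidableEq

/-- A plan rule: a finite premise and a conclusion (a goal literal). -/
structure PlanRule (α ν : Type) where
  prem : Finset (Elem α ν)
  concl : Lit α

/-- A partial plan `[H, ψ]`: a finite support `H` and a conclusion `ψ`. -/
structure PartialPlan (α ν : Type) where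
  body : Finset (Elem α ν)
  head : Elem α ν
deriving DecidableEq

/-- Finite trees whose nodes are partial plans. -/
inductive ArgTree (α ν : Type) where
  | node : PartialPlan α ν → List (ArgTree α ν) → ArgTree α ν

/-- The partial plan at the root of a tree. -/
def ArgTree.root {α ν : Type} : ArgTree α ν → PartialPlan α ν
  | .node pp _ => pp

/-- The finite set of partial plans occurring in a tree. -/
def ArgTree.supportF {α ν : Type} [DecidableEq α] [DecidableEq ν] :
    ArgTree α ν → Finset (PartialPlan α ν)
  | .node pp cs => insert pp ((cs.attach.map fun c => supportF c.1).foldr (· ∪ ·) ∅)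
termination_by t => sizeOf t
decreasing_by
  have := List.sizeOf_lt_of_mem c.2
  simp only [ArgTree.node.sizeOf_spec]
  omega

/-- The fixed context: pairwise disjoint sets of belief, goal and action
literals, and a fixed set `PR` of plan rules whose premises consist of
beliefs, actions, goals distinct from the conclusion, and resource atoms,
and whose conclusions are goals. -/
structure Ctx (α ν : Type) where
  Bel : Set (Lit α)
  Gl : Set (Lit α)
  Act : Set (Lit α)
  PR : Set (PlanRule α ν)
  disjBG : Disjoint Bel Gl
  disjBA : Disjoint Bel Act
  disjGA : Disjoint Gl Act
  rules_wf : ∀ r ∈ PR, r.concl ∈ Gl ∧ ∀ e ∈ r.prem,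
      (∃ l, e = Elem.lit l ∧ (l ∈ Bel ∨ l ∈ Act ∨ (l ∈ Gl ∧ l ≠ r.concl))) ∨
      (∃ n v, e = Elem.res n v)

variable {α ν : Type} [DecidableEq α] [DecidableEq ν]

/-- `pp` is a legitimate partial plan w.r.t. context `C`: either elementary
(empty support, with a belief, action or resource atom as conclusion), or its
conclusion is a goal and its support is the premise of a plan rule of `PR`
with that conclusion. -/
def Ctx.IsPartialPlan (C : Ctx α ν) (pp : PartialPlan α ν) : Prop :=
  (pp.body = ∅ ∧
    ((∃ l, pp.head = Elem.lit l ∧ (l ∈ C.Bel ∨ l ∈ C.Act)) ∨ ∃ n v, pp.head = Elem.res n v)) ∨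
  (∃ g ∈ C.Gl, pp.head = Elem.lit g ∧ ∃ r ∈ C.PR, r.concl = g ∧ pp.body = r.prem)

/-- Well-formedness of an argument tree: every node is a legitimate partial
plan having exactly one child per element of its support (the child's
conclusion being that element), and the leaves are elementary partial plans. -/
inductive Ctx.WFTree (C : Ctx α ν) : ArgTree α ν → Prop where
  | node (pp : PartialPlan α ν) (cs : List (ArgTree α ν)) :
      C.IsPartialPlan pp →
      (∀ e ∈ pp.body, ∃! c, c ∈ cs ∧ c.root.head = e) →
      (∀ c ∈ cs, c.root.head ∈ pp.body) →
      (cs = [] → pp.body = ∅ ∧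
        ((∃ l, pp.head = Elem.lit l ∧ (l ∈ C.Bel ∨ l ∈ C.Act)) ∨ ∃ n v, pp.head = Elem.res n v)) →
      (∀ c ∈ cs, C.WFTree c) →
      C.WFTree (ArgTree.node pp cs)

/-- An instrumental argument: a well-formed finite tree of partial plans
whose root concludes a goal, the claim of the argument. -/
structure InstArg (C : Ctx α ν) where
  tree : ArgTree α ν
  claim : Lit α
  claim_goal : claim ∈ C.Gl
  root_head : tree.root.head = Elem.lit claim
  wf : C.WFTree tree

variable {C : Ctx α ν}

/-- `SUPPORT(A)`: the set of partial plans occurring in the tree of `A`. -/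
def InstArg.SUPPORT (A : InstArg C) : Finset (PartialPlan α ν) := A.tree.supportF

/-- The resource atoms mentioned by an element. -/
def Elem.resAtoms : Elem α ν → Finset (ν × ℕ)
  | .res n v => {(n, v)}
  | _ => ∅

/-- `REC(A)`: the resource atoms occurring in the premises of the partial
plans of `A`. -/
def InstArg.REC (A : InstArg C) : Finset (ν × ℕ) :=
  A.SUPPORT.biUnion fun pp => pp.body.biUnion Elem.resAtoms

/-- Partial-plans rebuttal `R_t`: the claims differ and some partial plan of
`A` concludes the negation of the conclusion of some partial plan of `B`,
both conclusions being beliefs, both actions, or both goals. -/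
def Rt (A B : InstArg C) : Prop :=
  A.claim ≠ B.claim ∧
  ∃ ψ ψ' : Lit α,
    (∃ pp ∈ A.SUPPORT, pp.head = Elem.lit ψ) ∧
    (∃ pp ∈ B.SUPPORT, pp.head = Elem.lit ψ') ∧
    ψ = ψ'.compl ∧
    ((ψ ∈ C.Bel ∧ ψ' ∈ C.Bel) ∨ (ψ ∈ C.Act ∧ ψ' ∈ C.Act) ∨ (ψ ∈ C.Gl ∧ ψ' ∈ C.Gl))

/-- Resource attack `R_r` w.r.t. the availability function `ρ`: some resource
name occurs in atoms of both `REC(A)` and `REC(B)` and the sum of the values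
of all atoms with that name in `REC(A)` together with those in `REC(B)`
exceeds `ρ name`. -/
def Rr (ρ : ν → ℕ) (A B : InstArg C) : Prop :=
  ∃ n : ν, (∃ v, (n, v) ∈ A.REC) ∧ (∃ v, (n, v) ∈ B.REC) ∧
    ρ n < ∑ x ∈ (A.REC ∪ B.REC).filter (fun x => x.1 = n), x.2

/-- Superfluous attack `R_s`: the least relation closed under the three cases. -/
inductive Rs : InstArg C → InstArg C → Prop where
  | case1 (A B : InstArg C) :
      A.claim = B.claim → A.SUPPORT ≠ B.SUPPORT → Rs A B
  | case2 (A B A' B' : InstArg C) :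
      A.claim ≠ B.claim → Rs A' B' →
      (∃ pp ∈ A'.SUPPORT, pp.head = Elem.lit A.claim) →
      (∃ pp ∈ B'.SUPPORT, pp.head = Elem.lit B.claim) → Rs A B
  | case3 (A B A' : InstArg C) :
      A.claim ≠ B.claim → Rs A' B →
      (∃ pp ∈ A'.SUPPORT, pp.head = Elem.lit A.claim) →
      (¬ ∃ pp ∈ B.SUPPORT, pp.head = Elem.lit A.claim) → Rs A B

/-- Logical equivalence of arguments: same claim and same support. -/
def LEq (A A' : InstArg C) : Prop := A.claim = A'.claim ∧ A.SUPPORT = A'.SUPPORT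

/-- Resource equivalence of arguments: same resource atoms. -/
def REq (A A' : InstArg C) : Prop := A.REC = A'.REC

/-- Whole equivalence: logical and resource equivalence. -/
def WEq (A A' : InstArg C) : Prop := LEq A A' ∧ REq A A'

/-- The general attack relation `R_g = R_t ∪ R_r ∪ R_s`. -/
def Rg (ρ : ν → ℕ) (A B : InstArg C) : Prop := Rt A B ∨ Rr ρ A B ∨ Rs A B

/-- The attack relation of the general framework `AF_g'` after considering
successful attacks: an attack of `R_g` survives exactly when the attacker's
claim is not strictly less preferred than the attacked argument's claim. -/
def Rg' (ρ : ν → ℕ) (PREF : Lit α → ℝ) (A B : InstArg C) : Prop :=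
  Rg ρ A B ∧ PREF B.claim ≤ PREF A.claim

/-- `E` is conflict-free in `AF_g'`. -/
def ConflictFree (ρ : ν → ℕ) (PREF : Lit α → ℝ) (E : Set (InstArg C)) : Prop :=
  ∀ A ∈ E, ∀ B ∈ E, ¬ Rg' ρ PREF A B

/-- `BEL(E)`: the beliefs occurring in the premises of the partial plans of
the arguments in `E`. -/
def BEL (E : Set (InstArg C)) : Set (Lit α) :=
  {l | l ∈ C.Bel ∧ ∃ A ∈ E, ∃ pp ∈ A.SUPPORT, Elem.lit l ∈ pp.body}

/-- `ACT(E)`: the actions occurring in the premises of the partial plans of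
the arguments in `E`. -/
def ACTS (E : Set (InstArg C)) : Set (Lit α) :=
  {l | l ∈ C.Act ∧ ∃ A ∈ E, ∃ pp ∈ A.SUPPORT, Elem.lit l ∈ pp.body}

/-- `GOA(E)`: the goals occurring in the premises of the partial plans of
the arguments in `E`. -/
def GOA (E : Set (InstArg C)) : Set (Lit α) :=
  {l | l ∈ C.Gl ∧ ∃ A ∈ E, ∃ pp ∈ A.SUPPORT, Elem.lit l ∈ pp.body}

/-- `CONCS(E)`: the claims of the arguments of `E`. -/
def CONCS (E : Set (InstArg C)) : Set (Lit α) := {l | ∃ A ∈ E, A.claim = l}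

/-- Membership in the closure of `F` under the plan rules `PR`: the least
superset of `F` containing the conclusion of any rule of `PR` all of whose
premise elements it contains. -/
inductive InCl (PR : Set (PlanRule α ν)) (F : Set (Elem α ν)) : Elem α ν → Prop where
  | base {e : Elem α ν} : e ∈ F → InCl PR F e
  | step {r : PlanRule α ν} : r ∈ PR → (∀ e ∈ r.prem, InCl PR F e) →
      InCl PR F (Elem.lit r.concl)

/-- `Cl_PR(F)`: the closure of `F` under the set of plan rules `PR`. -/
def Cl (PR : Set (PlanRule α ν)) (F : Set (Elem α ν)) : Set (Elem α ν) := {e | InCl PR F e}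

/-- `Output`: the claims supported in every conflict-free extension of `AF_g'`. -/
def Output (C : Ctx α ν) (ρ : ν → ℕ) (PREF : Lit α → ℝ) : Set (Lit α) :=
  ⋂ E ∈ {E : Set (InstArg C) | ConflictFree ρ PREF E}, CONCS E

/-- The goal attack relation `RG`: `g` attacks `g'` when every argument for
`g` and every argument for `g'` stand (one way or the other) in `R_g`. -/
def RGoal (C : Ctx α ν) (ρ : ν → ℕ) (g g' : Lit α) : Prop :=
  ∀ A : InstArg C, A.claim = g → ∀ B : InstArg C, B.claim = g' → (Rg ρ A B ∨ Rg ρ B A)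

theorem ArgTree.root_mem_supportF (t : ArgTree α ν) : t.root ∈ t.supportF := by
  cases t
  rw [ArgTree.supportF]
  exact Finset.mem_insert_self _ _

theorem InstArg.exists_mem_SUPPORT_head_eq_claim (A : InstArg C) :
    ∃ pp ∈ A.SUPPORT, pp.head = Elem.lit A.claim :=
  ⟨A.tree.root, A.tree.root_mem_supportF, A.root_head⟩

theorem Rs.symm {A B : InstArg C} (h : Rs A B) : Rs B A := by
  induction h with
  | case1 A B hclaim hsupp => exact Rs.case1 B A hclaim.symm (Ne.symm hsupp)
  | case2 A B A' B' hne _ hA hB ih => exact Rs.case2 B A B' A' hne.symm ih hB hA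
  | case3 A B A' hne _ hA _ ih =>
      exact Rs.case2 B A B A' hne.symm ih B.exists_mem_SUPPORT_head_eq_claim hA

instance : Std.Symm (Rs (C := C)) := ⟨fun _ _ => Rs.symm⟩

theorem ConflictFree.not_rel_of_symm {ρ : ν → ℕ} {PREF : Lit α → ℝ}
    {E : Set (InstArg C)} (hE : ConflictFree ρ PREF E) {R : InstArg C → InstArg C → Prop}
    [Std.Symm R] (hRg : ∀ A B, R A B → Rg ρ A B) :
    ∀ A ∈ E, ∀ B ∈ E, ¬ R A B := by
  intro A hA B hB hAB
  rcases le_total (PREF B.claim) (PREF A.claim) with hpref | hpref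
  · exact hE A hA B hB ⟨hRg A B hAB, hpref⟩
  · exact hE B hB A hA ⟨hRg B A (Std.Symm.symm A B hAB), hpref⟩

theorem directConsistency_superfluity_general {α ν : Type} [DecidableEq α] [DecidableEq ν]
    {C : Ctx α ν} (ρ : ν → ℕ) (PREF : Lit α → ℝ)
    (E : Set (InstArg C)) (hE : ConflictFree ρ PREF E) :
    ∀ A ∈ E, ∀ B ∈ E, ¬ Rs A B :=
  hE.not_rel_of_symm fun _ _ h => Or.inr (Or.inr h)

/-- Direct consistency for superfluity: for every conflict-free
extension `E` of `AF_g'`, no two arguments of `E` stand in the superfluous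
attack relation `R_s`. -/
theorem directConsistency_superfluity {α ν : Type} [DecidableEq α] [DecidableEq ν]
    {C : Ctx α ν} (ρ : ν → ℕ) (PREF : Lit α → ℝ)
    (hPREF : ∀ g ∈ C.Gl, PREF g ∈ Set.Icc (0 : ℝ) 1)
    (E : Set (InstArg C)) (hE : ConflictFree ρ PREF E) :
    ∀ A ∈ E, ∀ B ∈ E, ¬ Rs A B :=
  directConsistency_superfluity_general ρ PREF E hE

end GoalsPaper
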